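/- arXiv:2401.15395 — 2 statements merged into one kernel-verified Lean document; each statement's English description precedes it below -/
import Mathlib

section
/- Consider the fuzzy frame F with W = {w, w', w''}, R(w,w') = R(w,w'') = 2/3 and R = 0 on all other pairs, and the KGinv-model on F in which every propositional variable q satisfies v(q,w) = 1, v(q,w') = 1/5 and v(q,w'') = 1/4. Then for every formula τ ∈ L_inv: v(τ,w'') = 0 iff v(τ,w') = 0; v(τ,w'') = 1/4 iff v(τ,w') = 1/5; v(τ,w'') = 3/4 iff v(τ,w') = 4/5; and v(τ,w'') = 1 iff v(τ,w') = 1. -/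
noncomputable def Gimp (x y : ℝ) : ℝ := if x ≤ y then 1 else y

inductive Fml : Type
  | var : ℕ → Fml
  | inv : Fml → Fml
  | and : Fml → Fml → Fml
  | imp : Fml → Fml → Fml
  | box : Fml → Fml
  | dia : Fml → Fml
  deriving DecidableEq

noncomputable def Fml.eval {W : Type} (R : W → W → ℝ) (v : ℕ → W → ℝ) : Fml → W → ℝ
  | .var p, w => v p w
  | .inv φ, w => 1 - Fml.eval R v φ w
  | .and φ χ, w => min (Fml.eval R v φ w) (Fml.eval R v χ w)
  | .imp φ χ, w => Gimp (Fml.eval R v φ w) (Fml.eval R v χ w)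
  | .box φ, w => sInf (Set.range fun w' => Gimp (R w w') (Fml.eval R v φ w'))
  | .dia φ, w => sSup (Set.range fun w' => min (R w w') (Fml.eval R v φ w'))

def KGinvValid {W : Type} (R : W → W → ℝ) (φ : Fml) : Prop :=
  ∀ v : ℕ → W → ℝ, (∀ p w, v p w ∈ Set.Icc (0:ℝ) 1) → ∀ w : W, Fml.eval R v φ w = 1

noncomputable def R3 : Fin 3 → Fin 3 → ℝ :=
  fun i j => if i = 0 ∧ (j = 1 ∨ j = 2) then 2/3 else 0

noncomputable def v3 : ℕ → Fin 3 → ℝ :=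
  fun _ w => if w = 0 then 1 else if w = 1 then 1/5 else 1/4

/-!
Worlds `1` and `2` are dead ends (`R3` vanishes on them), so at both every `□φ` takes the value
`1` and every `◇φ` the value `0`, while `¬ᵢ`, `∧` and `→` act pointwise. Hence a strictly
increasing `f` with `f 1 = 1` and `f (1 - x) = 1 - f x` that maps the valuation at world `1` to
the one at world `2` maps the value of every formula at `1` to its value at `2`. The cubic
`f x = x + 25/24 · x (x - 1/2) (x - 1)` is odd about `1/2` and has `f (1/5) = 1/4`; being
injective with `f 0 = 0`, `f (4/5) = 3/4` and `f 1 = 1`, it gives the four equivalences.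
-/

lemma Gimp_mem_Icc (x : ℝ) {y : ℝ} (hy : y ∈ Set.Icc (0 : ℝ) 1) : Gimp x y ∈ Set.Icc (0 : ℝ) 1 := by
  unfold Gimp
  split_ifs
  · exact Set.right_mem_Icc.2 zero_le_one
  · exact hy

lemma Gimp_of_le {x y : ℝ} (h : x ≤ y) : Gimp x y = 1 := if_pos h

lemma StrictMono.map_Gimp {f : ℝ → ℝ} (hf : StrictMono f) (hf1 : f 1 = 1) (x y : ℝ) :
    f (Gimp x y) = Gimp (f x) (f y) := by
  unfold Gimp
  simp only [hf.le_iff_le]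
  split_ifs <;> simp [hf1]

namespace Fml

variable {W : Type} {R : W → W → ℝ} {v : ℕ → W → ℝ}

lemma eval_mem_Icc (hR : ∀ w w', 0 ≤ R w w') (hv : ∀ p w, v p w ∈ Set.Icc (0 : ℝ) 1) :
    ∀ (φ : Fml) (w : W), φ.eval R v w ∈ Set.Icc (0 : ℝ) 1
  | var p, w => hv p w
  | inv φ, w => by
    have := eval_mem_Icc hR hv φ w
    simp only [eval, Set.mem_Icc] at this ⊢
    constructor <;> linarith [this.1, this.2]
  | and φ χ, w => by
    have hφ := eval_mem_Icc hR hv φ w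
    have hχ := eval_mem_Icc hR hv χ w
    exact ⟨le_min hφ.1 hχ.1, (min_le_left _ _).trans hφ.2⟩
  | imp φ χ, w => Gimp_mem_Icc _ (eval_mem_Icc hR hv χ w)
  | box φ, w => by
    have : Nonempty W := ⟨w⟩
    have hmem w' := Gimp_mem_Icc (R w w') (eval_mem_Icc hR hv φ w')
    exact ⟨le_ciInf fun w' => (hmem w').1,
      (ciInf_le ⟨0, Set.forall_mem_range.2 fun w' => (hmem w').1⟩ w).trans (hmem w).2⟩
  | dia φ, w => by
    have : Nonempty W := ⟨w⟩
    have hmem := eval_mem_Icc hR hv φ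
    have hbdd : BddAbove (Set.range fun w' => min (R w w') (φ.eval R v w')) :=
      ⟨1, Set.forall_mem_range.2 fun w' => (min_le_right _ _).trans (hmem w').2⟩
    exact ⟨(le_min (hR w w) (hmem w).1).trans (le_ciSup hbdd w),
      ciSup_le fun w' => (min_le_right _ _).trans (hmem w').2⟩

lemma eval_box_of_deadEnd {u : W} (hu : ∀ w, R u w = 0) {φ : Fml}
    (hφ : ∀ w, 0 ≤ φ.eval R v w) : φ.box.eval R v u = 1 := by
  have : Nonempty W := ⟨u⟩
  simp only [eval, hu, Gimp_of_le (hφ _)]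
  exact ciInf_const

lemma eval_dia_of_deadEnd {u : W} (hu : ∀ w, R u w = 0) {φ : Fml}
    (hφ : ∀ w, 0 ≤ φ.eval R v w) : φ.dia.eval R v u = 0 := by
  have : Nonempty W := ⟨u⟩
  simp only [eval, hu, min_eq_left (hφ _)]
  exact ciSup_const

theorem eval_deadEnd_eq_comp (hR : ∀ w w', 0 ≤ R w w') (hv : ∀ p w, v p w ∈ Set.Icc (0 : ℝ) 1)
    {f : ℝ → ℝ} (hf : StrictMono f) (hf1 : f 1 = 1) (hf_neg : ∀ x, f (1 - x) = 1 - f x)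
    {u u' : W} (hu : ∀ w, R u w = 0) (hu' : ∀ w, R u' w = 0) (huv : ∀ p, v p u' = f (v p u)) :
    ∀ φ : Fml, φ.eval R v u' = f (φ.eval R v u)
  | var p => huv p
  | inv φ => by
    simp only [eval, hf_neg, eval_deadEnd_eq_comp hR hv hf hf1 hf_neg hu hu' huv φ]
  | and φ χ => by
    simp only [eval, hf.monotone.map_min, eval_deadEnd_eq_comp hR hv hf hf1 hf_neg hu hu' huv]
  | imp φ χ => by
    simp only [eval, hf.map_Gimp hf1, eval_deadEnd_eq_comp hR hv hf hf1 hf_neg hu hu' huv]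
  | box φ => by
    have hφ w := (eval_mem_Icc hR hv φ w).1
    rw [eval_box_of_deadEnd hu hφ, eval_box_of_deadEnd hu' hφ, hf1]
  | dia φ => by
    have hφ w := (eval_mem_Icc hR hv φ w).1
    rw [eval_dia_of_deadEnd hu hφ, eval_dia_of_deadEnd hu' hφ]
    simpa [hf1] using (hf_neg 1).symm

end Fml

noncomputable def cubicAut (x : ℝ) : ℝ := x + 25 / 24 * (x * (x - 1 / 2) * (x - 1))

lemma cubicAut_strictMono : StrictMono cubicAut := by
  intro x y hxy
  have hquad : 0 ≤ (x - 1/2) ^ 2 + (x - 1/2) * (y - 1/2) + (y - 1/2) ^ 2 := by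
    nlinarith [sq_nonneg (x + y - 1), sq_nonneg (x - 1/2), sq_nonneg (y - 1/2)]
  have hdiff : cubicAut y - cubicAut x =
      (y - x) * (71 / 96 + 25 / 24 * ((x - 1/2) ^ 2 + (x - 1/2) * (y - 1/2) + (y - 1/2) ^ 2)) := by
    unfold cubicAut; ring
  have := mul_pos (sub_pos.2 hxy) (by linarith : (0 : ℝ) <
    71 / 96 + 25 / 24 * ((x - 1/2) ^ 2 + (x - 1/2) * (y - 1/2) + (y - 1/2) ^ 2))
  linarith

lemma cubicAut_one_sub (x : ℝ) : cubicAut (1 - x) = 1 - cubicAut x := by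
  unfold cubicAut; ring

lemma cubicAut_one : cubicAut 1 = 1 := by norm_num [cubicAut]

lemma cubicAut_zero : cubicAut 0 = 0 := by norm_num [cubicAut]

lemma cubicAut_one_fifth : cubicAut (1 / 5) = 1 / 4 := by norm_num [cubicAut]

lemma cubicAut_four_fifths : cubicAut (4 / 5) = 3 / 4 := by norm_num [cubicAut]

lemma R3_nonneg (w w' : Fin 3) : 0 ≤ R3 w w' := by
  unfold R3; split_ifs <;> norm_num

lemma v3_mem_Icc (p : ℕ) (w : Fin 3) : v3 p w ∈ Set.Icc (0 : ℝ) 1 := by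
  unfold v3; split_ifs <;> norm_num

lemma eval_R3_v3_two (τ : Fml) : τ.eval R3 v3 2 = cubicAut (τ.eval R3 v3 1) :=
  Fml.eval_deadEnd_eq_comp R3_nonneg v3_mem_Icc cubicAut_strictMono cubicAut_one cubicAut_one_sub
    (by simp [R3]) (by simp [R3]) (fun _ => by simpa [v3] using cubicAut_one_fifth.symm) τ

theorem statement4 (τ : Fml) :
    (Fml.eval R3 v3 τ 2 = 0 ↔ Fml.eval R3 v3 τ 1 = 0) ∧
    (Fml.eval R3 v3 τ 2 = 1/4 ↔ Fml.eval R3 v3 τ 1 = 1/5) ∧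
    (Fml.eval R3 v3 τ 2 = 3/4 ↔ Fml.eval R3 v3 τ 1 = 4/5) ∧
    (Fml.eval R3 v3 τ 2 = 1 ↔ Fml.eval R3 v3 τ 1 = 1) := by
  have hinj (c : ℝ) := cubicAut_strictMono.injective.eq_iff (a := τ.eval R3 v3 1) (b := c)
  rw [eval_R3_v3_two]
  exact ⟨by simpa only [cubicAut_zero] using hinj 0,
    by simpa only [cubicAut_one_fifth] using hinj (1 / 5),
    by simpa only [cubicAut_four_fifths] using hinj (4 / 5),
    by simpa only [cubicAut_one] using hinj 1⟩
end

section
/- Let ⟨F,w⟩ = ⟨⟨W,R⁺,R⁻⟩,w⟩ be a bi-relational pointed fuzzy frame and φ ∈ L_inv(2). Then φ is KGinv(2)-valid on ⟨F,w⟩ if and only if B → φ^⋈ is strongly valid on ⟨F,w⟩ in KGbl. -/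
inductive Fml2 : Type
  | var : ℕ → Fml2
  | inv : Fml2 → Fml2
  | and : Fml2 → Fml2 → Fml2
  | imp : Fml2 → Fml2 → Fml2
  | box1 : Fml2 → Fml2
  | dia1 : Fml2 → Fml2
  | box2 : Fml2 → Fml2
  | dia2 : Fml2 → Fml2

noncomputable def Fml2.eval {W : Type} (Rp Rm : W → W → ℝ) (v : ℕ → W → ℝ) : Fml2 → W → ℝ
  | .var p, w => v p w
  | .inv φ, w => 1 - Fml2.eval Rp Rm v φ w
  | .and φ χ, w => min (Fml2.eval Rp Rm v φ w) (Fml2.eval Rp Rm v χ w)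
  | .imp φ χ, w => Gimp (Fml2.eval Rp Rm v φ w) (Fml2.eval Rp Rm v χ w)
  | .box1 φ, w => sInf (Set.range fun w' => Gimp (Rp w w') (Fml2.eval Rp Rm v φ w'))
  | .dia1 φ, w => sSup (Set.range fun w' => min (Rp w w') (Fml2.eval Rp Rm v φ w'))
  | .box2 φ, w => sInf (Set.range fun w' => Gimp (Rm w w') (Fml2.eval Rp Rm v φ w'))
  | .dia2 φ, w => sSup (Set.range fun w' => min (Rm w w') (Fml2.eval Rp Rm v φ w'))

inductive Lbl : Type
  | var : ℕ → Lbl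
  | neg : Lbl → Lbl
  | and : Lbl → Lbl → Lbl
  | imp : Lbl → Lbl → Lbl
  | box : Lbl → Lbl
  | dia : Lbl → Lbl
  | conf : Lbl → Lbl
  | sAnd : Lbl → Lbl → Lbl
  | sImp : Lbl → Lbl → Lbl
  | bbox : Lbl → Lbl
  | bdia : Lbl → Lbl

noncomputable def Lbl.eval {W : Type} (Rp Rm : W → W → ℝ) (v1 v2 : ℕ → W → ℝ) :
    Lbl → W → ℝ × ℝ
  | .var p, w => (v1 p w, v2 p w)
  | .neg φ, w => ((Lbl.eval Rp Rm v1 v2 φ w).2, (Lbl.eval Rp Rm v1 v2 φ w).1)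
  | .conf φ, w => (1 - (Lbl.eval Rp Rm v1 v2 φ w).2, 1 - (Lbl.eval Rp Rm v1 v2 φ w).1)
  | .and φ χ, w =>
      (min (Lbl.eval Rp Rm v1 v2 φ w).1 (Lbl.eval Rp Rm v1 v2 χ w).1,
       max (Lbl.eval Rp Rm v1 v2 φ w).2 (Lbl.eval Rp Rm v1 v2 χ w).2)
  | .imp φ χ, w =>
      (Gimp (Lbl.eval Rp Rm v1 v2 φ w).1 (Lbl.eval Rp Rm v1 v2 χ w).1,
       if (Lbl.eval Rp Rm v1 v2 χ w).2 ≤ (Lbl.eval Rp Rm v1 v2 φ w).2 then 0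
       else (Lbl.eval Rp Rm v1 v2 χ w).2)
  | .sAnd φ χ, w =>
      (min (Lbl.eval Rp Rm v1 v2 φ w).1 (Lbl.eval Rp Rm v1 v2 χ w).1,
       min (Lbl.eval Rp Rm v1 v2 φ w).2 (Lbl.eval Rp Rm v1 v2 χ w).2)
  | .sImp φ χ, w =>
      (Gimp (Lbl.eval Rp Rm v1 v2 φ w).1 (Lbl.eval Rp Rm v1 v2 χ w).1,
       Gimp (Lbl.eval Rp Rm v1 v2 φ w).2 (Lbl.eval Rp Rm v1 v2 χ w).2)
  | .box φ, w =>
      (sInf (Set.range fun w' => Gimp (Rp w w') (Lbl.eval Rp Rm v1 v2 φ w').1),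
       sSup (Set.range fun w' => min (Rm w w') (Lbl.eval Rp Rm v1 v2 φ w').2))
  | .dia φ, w =>
      (sSup (Set.range fun w' => min (Rp w w') (Lbl.eval Rp Rm v1 v2 φ w').1),
       sInf (Set.range fun w' => Gimp (Rm w w') (Lbl.eval Rp Rm v1 v2 φ w').2))
  | .bbox φ, w =>
      (sInf (Set.range fun w' => Gimp (Rp w w') (Lbl.eval Rp Rm v1 v2 φ w').1),
       sInf (Set.range fun w' => Gimp (Rm w w') (Lbl.eval Rp Rm v1 v2 φ w').2))
  | .bdia φ, w =>
      (sSup (Set.range fun w' => min (Rp w w') (Lbl.eval Rp Rm v1 v2 φ w').1),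
       sSup (Set.range fun w' => min (Rm w w') (Lbl.eval Rp Rm v1 v2 φ w').2))

/-- KGinv(2)-validity on a pointed frame. -/
def Valid2 {W : Type} (Rp Rm : W → W → ℝ) (φ : Fml2) (w : W) : Prop :=
  ∀ v : ℕ → W → ℝ, (∀ p u, v p u ∈ Set.Icc (0:ℝ) 1) → Fml2.eval Rp Rm v φ w = 1

/-- v₁-validity on a pointed frame. -/
def V1Valid {W : Type} (Rp Rm : W → W → ℝ) (φ : Lbl) (w : W) : Prop :=
  ∀ v1 v2 : ℕ → W → ℝ, (∀ p u, v1 p u ∈ Set.Icc (0:ℝ) 1) →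
    (∀ p u, v2 p u ∈ Set.Icc (0:ℝ) 1) → (Lbl.eval Rp Rm v1 v2 φ w).1 = 1

/-- v₂-validity on a pointed frame. -/
def V2Valid {W : Type} (Rp Rm : W → W → ℝ) (φ : Lbl) (w : W) : Prop :=
  ∀ v1 v2 : ℕ → W → ℝ, (∀ p u, v1 p u ∈ Set.Icc (0:ℝ) 1) →
    (∀ p u, v2 p u ∈ Set.Icc (0:ℝ) 1) → (Lbl.eval Rp Rm v1 v2 φ w).2 = 0

/-- Strong validity on a pointed frame. -/
def StrongValid {W : Type} (Rp Rm : W → W → ℝ) (φ : Lbl) (w : W) : Prop :=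
  V1Valid Rp Rm φ w ∧ V2Valid Rp Rm φ w

/-- The ⋈ translation from L_inv(2) to Lbl: □₁ ↦ □, ◇₁ ↦ ◇, □₂ ↦ ¬◇¬, ◇₂ ↦ ¬□¬,
¬ᵢ ↦ ¬− . -/
def Fml2.toBl : Fml2 → Lbl
  | .var p => .var p
  | .inv φ => .neg (.conf φ.toBl)
  | .and φ χ => .and φ.toBl χ.toBl
  | .imp φ χ => .imp φ.toBl χ.toBl
  | .box1 φ => .box φ.toBl
  | .dia1 φ => .dia φ.toBl
  | .box2 φ => .neg (.dia (.neg φ.toBl))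
  | .dia2 φ => .neg (.box (.neg φ.toBl))

def Lbl.B : Lbl := .sImp (.var 0) (.var 0)

lemma min_mem_of_mem {α : Type*} [LinearOrder α] {s : Set α} {x y : α} (hx : x ∈ s)
    (hy : y ∈ s) : min x y ∈ s := by
  rcases min_choice x y with h | h <;> rwa [h]

lemma max_mem_of_mem {α : Type*} [LinearOrder α] {s : Set α} {x y : α} (hx : x ∈ s)
    (hy : y ∈ s) : max x y ∈ s := by
  rcases max_choice x y with h | h <;> rwa [h]

lemma Real.iInf_mem_Icc_zero_one {ι : Type*} {f : ι → ℝ} (hf : ∀ i, f i ∈ Set.Icc (0:ℝ) 1) :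
    ⨅ i, f i ∈ Set.Icc (0:ℝ) 1 := by
  refine ⟨Real.iInf_nonneg fun i => (hf i).1, ?_⟩
  cases isEmpty_or_nonempty ι
  · simp
  · exact (ciInf_le ⟨0, Set.forall_mem_range.2 fun i => (hf i).1⟩ (Classical.arbitrary ι)).trans
      (hf _).2

lemma Real.iSup_mem_Icc_zero_one {ι : Type*} {f : ι → ℝ} (hf : ∀ i, f i ∈ Set.Icc (0:ℝ) 1) :
    ⨆ i, f i ∈ Set.Icc (0:ℝ) 1 :=
  ⟨Real.iSup_nonneg fun i => (hf i).1, Real.iSup_le (fun i => (hf i).2) zero_le_one⟩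

lemma Gimp_self (x : ℝ) : Gimp x x = 1 := if_pos le_rfl

lemma Gimp_mem {s : Set ℝ} (x : ℝ) {y : ℝ} (h1 : (1:ℝ) ∈ s) (hy : y ∈ s) : Gimp x y ∈ s := by
  unfold Gimp; split_ifs <;> assumption

lemma Gimp_one_left_eq_one_iff {y : ℝ} (hy : y ≤ 1) : Gimp 1 y = 1 ↔ y = 1 := by
  unfold Gimp; split_ifs with h
  · exact ⟨fun _ => le_antisymm hy h, fun _ => rfl⟩
  · exact Iff.rfl

lemma Lbl.eval_mem_Icc {W : Type} {Rp Rm : W → W → ℝ}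
    (hRp : ∀ w w', Rp w w' ∈ Set.Icc (0:ℝ) 1) (hRm : ∀ w w', Rm w w' ∈ Set.Icc (0:ℝ) 1)
    {v1 v2 : ℕ → W → ℝ} (hv1 : ∀ p u, v1 p u ∈ Set.Icc (0:ℝ) 1)
    (hv2 : ∀ p u, v2 p u ∈ Set.Icc (0:ℝ) 1) (φ : Lbl) (w : W) :
    (Lbl.eval Rp Rm v1 v2 φ w).1 ∈ Set.Icc (0:ℝ) 1 ∧
      (Lbl.eval Rp Rm v1 v2 φ w).2 ∈ Set.Icc (0:ℝ) 1 := by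
  have one_mem : (1:ℝ) ∈ Set.Icc (0:ℝ) 1 := ⟨zero_le_one, le_rfl⟩
  induction φ generalizing w with
  | var p => exact ⟨hv1 p w, hv2 p w⟩
  | neg φ ih => exact (ih w).symm
  | conf φ ih =>
    exact ⟨Set.Icc.mem_iff_one_sub_mem.1 (ih w).2, Set.Icc.mem_iff_one_sub_mem.1 (ih w).1⟩
  | and φ χ ihφ ihχ => exact ⟨min_mem_of_mem (ihφ w).1 (ihχ w).1, max_mem_of_mem (ihφ w).2 (ihχ w).2⟩
  | imp φ χ _ ihχ =>
    refine ⟨Gimp_mem _ one_mem (ihχ w).1, ?_⟩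
    simp only [Lbl.eval]
    split_ifs
    exacts [⟨le_rfl, zero_le_one⟩, (ihχ w).2]
  | sAnd φ χ ihφ ihχ => exact ⟨min_mem_of_mem (ihφ w).1 (ihχ w).1, min_mem_of_mem (ihφ w).2 (ihχ w).2⟩
  | sImp φ χ _ ihχ => exact ⟨Gimp_mem _ one_mem (ihχ w).1, Gimp_mem _ one_mem (ihχ w).2⟩
  | box φ ih =>
    exact ⟨Real.iInf_mem_Icc_zero_one fun w' => Gimp_mem _ one_mem (ih w').1,
      Real.iSup_mem_Icc_zero_one fun w' => min_mem_of_mem (hRm w w') (ih w').2⟩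
  | dia φ ih =>
    exact ⟨Real.iSup_mem_Icc_zero_one fun w' => min_mem_of_mem (hRp w w') (ih w').1,
      Real.iInf_mem_Icc_zero_one fun w' => Gimp_mem _ one_mem (ih w').2⟩
  | bbox φ ih =>
    exact ⟨Real.iInf_mem_Icc_zero_one fun w' => Gimp_mem _ one_mem (ih w').1,
      Real.iInf_mem_Icc_zero_one fun w' => Gimp_mem _ one_mem (ih w').2⟩
  | bdia φ ih =>
    exact ⟨Real.iSup_mem_Icc_zero_one fun w' => min_mem_of_mem (hRp w w') (ih w').1,
      Real.iSup_mem_Icc_zero_one fun w' => min_mem_of_mem (hRm w w') (ih w').2⟩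

lemma Lbl.eval_B {W : Type} (Rp Rm : W → W → ℝ) (v1 v2 : ℕ → W → ℝ) (w : W) :
    Lbl.eval Rp Rm v1 v2 Lbl.B w = (1, 1) := by
  simp only [Lbl.B, Lbl.eval, Gimp_self]

lemma Fml2.eval_toBl_fst {W : Type} (Rp Rm : W → W → ℝ) (v1 v2 : ℕ → W → ℝ) (φ : Fml2)
    (w : W) : (Lbl.eval Rp Rm v1 v2 φ.toBl w).1 = Fml2.eval Rp Rm v1 φ w := by
  induction φ generalizing w with
  | var p => rfl
  | inv φ ih => simp only [Fml2.toBl, Lbl.eval, Fml2.eval, ih]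
  | and φ χ ihφ ihχ => simp only [Fml2.toBl, Lbl.eval, Fml2.eval, ihφ, ihχ]
  | imp φ χ ihφ ihχ => simp only [Fml2.toBl, Lbl.eval, Fml2.eval, ihφ, ihχ]
  | box1 φ ih => simp only [Fml2.toBl, Lbl.eval, Fml2.eval, ih]
  | dia1 φ ih => simp only [Fml2.toBl, Lbl.eval, Fml2.eval, ih]
  | box2 φ ih => simp only [Fml2.toBl, Lbl.eval, Fml2.eval, ih]
  | dia2 φ ih => simp only [Fml2.toBl, Lbl.eval, Fml2.eval, ih]

lemma Fml2.valid2_iff_v1Valid_toBl {W : Type} (Rp Rm : W → W → ℝ) (φ : Fml2) (w : W) :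
    Valid2 Rp Rm φ w ↔ V1Valid Rp Rm φ.toBl w := by
  simp only [Valid2, V1Valid, Fml2.eval_toBl_fst]
  exact ⟨fun h v1 _ hv1 _ => h v1 hv1,
    fun h v hv => h v (fun _ _ => 0) hv fun _ _ => ⟨le_rfl, zero_le_one⟩⟩

lemma Lbl.v1Valid_imp_B_iff {W : Type} {Rp Rm : W → W → ℝ}
    (hRp : ∀ w w', Rp w w' ∈ Set.Icc (0:ℝ) 1) (hRm : ∀ w w', Rm w w' ∈ Set.Icc (0:ℝ) 1)
    (φ : Lbl) (w : W) : V1Valid Rp Rm (.imp Lbl.B φ) w ↔ V1Valid Rp Rm φ w := by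
  refine forall₄_congr fun v1 v2 hv1 hv2 => ?_
  simp only [Lbl.eval, Lbl.eval_B]
  exact Gimp_one_left_eq_one_iff (Lbl.eval_mem_Icc hRp hRm hv1 hv2 φ w).1.2

lemma Lbl.v2Valid_imp_B {W : Type} {Rp Rm : W → W → ℝ}
    (hRp : ∀ w w', Rp w w' ∈ Set.Icc (0:ℝ) 1) (hRm : ∀ w w', Rm w w' ∈ Set.Icc (0:ℝ) 1)
    (φ : Lbl) (w : W) : V2Valid Rp Rm (.imp Lbl.B φ) w := by
  intro v1 v2 hv1 hv2
  simp only [Lbl.eval, Lbl.eval_B]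
  exact if_pos (Lbl.eval_mem_Icc hRp hRm hv1 hv2 φ w).2.2

theorem statement9_general {W : Type} (Rp Rm : W → W → ℝ)
    (hRp : ∀ w w', Rp w w' ∈ Set.Icc (0:ℝ) 1)
    (hRm : ∀ w w', Rm w w' ∈ Set.Icc (0:ℝ) 1)
    (w : W) (φ : Fml2) :
    Valid2 Rp Rm φ w ↔ StrongValid Rp Rm (.imp Lbl.B φ.toBl) w := by
  rw [StrongValid, Lbl.v1Valid_imp_B_iff hRp hRm, ← Fml2.valid2_iff_v1Valid_toBl]
  exact (and_iff_left (Lbl.v2Valid_imp_B hRp hRm _ w)).symm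

/-- φ is KGinv(2)-valid on ⟨F,w⟩ iff B → φ^⋈ is strongly valid on ⟨F,w⟩. -/
theorem statement9 {W : Type} [Nonempty W] (Rp Rm : W → W → ℝ)
    (hRp : ∀ w w', Rp w w' ∈ Set.Icc (0:ℝ) 1)
    (hRm : ∀ w w', Rm w w' ∈ Set.Icc (0:ℝ) 1)
    (w : W) (φ : Fml2) :
    Valid2 Rp Rm φ w ↔ StrongValid Rp Rm (.imp Lbl.B φ.toBl) w :=
  statement9_general Rp Rm hRp hRm w φ
end
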